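/- Let P be a connected finite Γ-colored d-complete poset and let a ∈ Γ. Then P is extendable by a if and only if L_a(P) = 2, where L_a(P) = ∑_{x ∈ L(y,P)} −θ_{κ(x),a} and y is the minimum of the finite nonempty chain P_a. -/

import Mathlib

/-!
Common definitions: Dynkin diagram data, Γ-colored posets, and the coloring
properties EC, NA, AC, ICE2, UCB1, LCB1 from the paper, together with
Γ-colored d-complete and Γ-colored minuscule posets, top trees, slant
irreducibility, extensions, lower frontier censuses, and full heaps.
-/

universe u v w

variable {Γ : Type u} {P : Type v}

/-- The integers `θ a b` form a Dynkin diagram datum. -/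
def DynkinDatum (θ : Γ → Γ → ℤ) : Prop :=
  (∀ a : Γ, θ a a = 2) ∧ (∀ a b : Γ, a ≠ b → θ a b ≤ 0) ∧
    (∀ a b : Γ, a ≠ b → (θ a b = 0 ↔ θ b a = 0))

/-- Colors `a` and `b` are adjacent. -/
def AdjColor (θ : Γ → Γ → ℤ) (a b : Γ) : Prop := θ a b < 0

/-- The Dynkin diagram is simply laced. -/
def SimplyLaced (θ : Γ → Γ → ℤ) : Prop :=
  ∀ a b : Γ, a ≠ b → θ a b = 0 ∨ θ a b = -1

/-- All closed intervals are finite. -/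
def LocallyFinitePoset (α : Type*) [PartialOrder α] : Prop :=
  ∀ x y : α, (Set.Icc x y).Finite

/-- A poset is connected if it cannot be written as a disjoint union of two nonempty
subposets with no comparabilities between them. -/
def ConnectedPoset (α : Type*) [PartialOrder α] : Prop :=
  ∀ S : Set α, S.Nonempty → Sᶜ.Nonempty → ∃ x ∈ S, ∃ y ∈ Sᶜ, x ≤ y ∨ y ≤ x

section
variable [PartialOrder P]

/-- (EC) Elements with equal colors are comparable. -/
def ColoredEC (κ : P → Γ) : Prop := ∀ x y : P, κ x = κ y → x ≤ y ∨ y ≤ x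

/-- (NA) Neighbors have adjacent colors. -/
def ColoredNA (θ : Γ → Γ → ℤ) (κ : P → Γ) : Prop :=
  ∀ x y : P, x ⋖ y → AdjColor θ (κ x) (κ y)

/-- (AC) Elements with adjacent colors are comparable. -/
def ColoredAC (θ : Γ → Γ → ℤ) (κ : P → Γ) : Prop :=
  ∀ x y : P, AdjColor θ (κ x) (κ y) → x ≤ y ∨ y ≤ x

/-- (ICE2) Between consecutive elements of a color `a`, the census of colors
adjacent to `a` is two. -/
def ColoredICE2 (θ : Γ → Γ → ℤ) (κ : P → Γ) : Prop :=
  ∀ (a : Γ) (x y : P), κ x = a → κ y = a → x < y → (∀ z ∈ Set.Ioo x y, κ z ≠ a) →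
    (∑ᶠ z ∈ Set.Ioo x y, -θ (κ z) a) = 2

/-- `U(x,P)`: elements above `x` with color adjacent to that of `x`. -/
def USet (θ : Γ → Γ → ℤ) (κ : P → Γ) (x : P) : Set P :=
  {y : P | x < y ∧ AdjColor θ (κ y) (κ x)}

/-- `L(x,P)`: elements below `x` with color adjacent to that of `x`. -/
def LSet (θ : Γ → Γ → ℤ) (κ : P → Γ) (x : P) : Set P :=
  {y : P | y < x ∧ AdjColor θ (κ y) (κ x)}

/-- (UCB1) Upper frontier census bound. -/
def ColoredUCB1 (θ : Γ → Γ → ℤ) (κ : P → Γ) : Prop :=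
  ∀ x : P, (∀ y : P, κ y = κ x → ¬x < y) →
    (USet θ κ x).Finite ∧ (∑ᶠ y ∈ USet θ κ x, -θ (κ y) (κ x)) ≤ 1

/-- (LCB1) Lower frontier census bound. -/
def ColoredLCB1 (θ : Γ → Γ → ℤ) (κ : P → Γ) : Prop :=
  ∀ x : P, (∀ y : P, κ y = κ x → ¬y < x) →
    (LSet θ κ x).Finite ∧ (∑ᶠ y ∈ LSet θ κ x, -θ (κ y) (κ x)) ≤ 1

/-- A Γ-colored d-complete poset: locally finite, surjectively colored, and
satisfying EC, NA, AC, ICE2, and UCB1. -/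
def GColoredDComplete (θ : Γ → Γ → ℤ) (κ : P → Γ) : Prop :=
  LocallyFinitePoset P ∧ Function.Surjective κ ∧ ColoredEC κ ∧ ColoredNA θ κ ∧
    ColoredAC θ κ ∧ ColoredICE2 θ κ ∧ ColoredUCB1 θ κ

/-- A Γ-colored minuscule poset: Γ-colored d-complete and LCB1. -/
def GColoredMinuscule (θ : Γ → Γ → ℤ) (κ : P → Γ) : Prop :=
  GColoredDComplete θ κ ∧ ColoredLCB1 θ κ

/-- The top tree: the set of elements maximal in their color class. -/
def TopTree (κ : P → Γ) : Set P := {x : P | ∀ y : P, κ y = κ x → ¬x < y}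

/-- `x` is covered by `y` within the subposet `S`. -/
def CoversIn (S : Set P) (x y : P) : Prop :=
  x ∈ S ∧ y ∈ S ∧ x < y ∧ ∀ z ∈ S, x < z → ¬z < y

/-- Slant irreducibility of a Γ-colored d-complete poset. -/
def SlantIrreducible (κ : P → Γ) : Prop :=
  ConnectedPoset P ∧ ∀ x y : P, CoversIn (TopTree κ) x y → ∃ z : P, z ≠ y ∧ κ z = κ y

/-- A saturated chain in a subposet `S`: a chain that is convex in `S`. -/
def SaturatedChainIn (S C : Set P) : Prop :=
  C ⊆ S ∧ IsChain (· ≤ ·) C ∧ ∀ x ∈ C, ∀ y ∈ C, ∀ z ∈ S, x < z → z < y → z ∈ C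

/-- The lower frontier census at the element `y`. -/
noncomputable def LCensus (θ : Γ → Γ → ℤ) (κ : P → Γ) (y : P) : ℤ :=
  ∑ᶠ x ∈ LSet θ κ y, -θ (κ x) (κ y)

/-- A full heap: locally finite, surjectively colored, EC, NA, AC, ICE2, and every
color class order-isomorphic to ℤ. -/
def FullHeap (θ : Γ → Γ → ℤ) (κ : P → Γ) : Prop :=
  LocallyFinitePoset P ∧ Function.Surjective κ ∧ ColoredEC κ ∧ ColoredNA θ κ ∧
    ColoredAC θ κ ∧ ColoredICE2 θ κ ∧ ∀ a : Γ, Nonempty ({x : P // κ x = a} ≃o ℤ)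

end

/-- `ι` realizes the colored poset `A` as an order filter of the colored poset `B`. -/
def FilterEmbedding {G : Type*} {A B : Type*} [PartialOrder A] [PartialOrder B]
    (κ : A → G) (κ' : B → G) (ι : A → B) : Prop :=
  (∀ p q : A, ι p ≤ ι q ↔ p ≤ q) ∧ (∀ p : A, κ' (ι p) = κ p) ∧ IsUpperSet (Set.range ι)

/-- `B` is an extension of `A` by the color `a`, with extending element `x`. -/
def IsExtensionBy {G : Type*} {A B : Type*} [PartialOrder A] [PartialOrder B]
    (θ : G → G → ℤ) (κ : A → G) (κ' : B → G) (a : G) (ι : A → B) (x : B) : Prop :=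
  Finite B ∧ GColoredDComplete θ κ' ∧ ConnectedPoset B ∧
    FilterEmbedding κ κ' ι ∧ (Set.range ι)ᶜ = {x} ∧ κ' x = a

/-!
If `P'` extends `P` by an element `x` of color `a`, then `x` and the minimum `y` of `P_a` are
consecutive of color `a`, everything strictly between them lies in `P`, and by AC this includes
all of `L(y,P)`; so ICE2 for `x < y` reads `L_a(P) = 2`. Conversely, if `L_a(P) = 2`, adjoin `x`
below the upper closure of the elements whose color is `a` or adjacent to `a`. Then ICE2 for
`x < y` is the census condition, and every other axiom either is inherited from `P` or is forced
by the choice of that upper set.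
-/

theorem Minimal.mem_of_mem_upperClosure {α : Type*} [PartialOrder α] {s : Set α} {x : α}
    (h : Minimal (· ∈ upperClosure s) x) : x ∈ s := by
  obtain ⟨z, hz, hzx⟩ := mem_upperClosure.1 h.prop
  rwa [h.eq_of_ge (subset_upperClosure hz) hzx]

namespace DynkinDatum

variable {θ : Γ → Γ → ℤ}

theorem adjColor_symm (hθ : DynkinDatum θ) {b c : Γ} (h : AdjColor θ b c) : AdjColor θ c b := by
  have hbc : b ≠ c := by rintro rfl; simp [AdjColor, hθ.1] at h
  exact (hθ.2.1 c b hbc.symm).lt_of_ne fun h0 => h.ne ((hθ.2.2 c b hbc.symm).1 h0)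

theorem eq_zero_of_not_adjColor (hθ : DynkinDatum θ) {b c : Γ} (hbc : b ≠ c)
    (h : ¬AdjColor θ b c) : θ b c = 0 :=
  le_antisymm (hθ.2.1 b c hbc) (not_lt.1 h)

end DynkinDatum

section Census

variable [PartialOrder P] {θ : Γ → Γ → ℤ} {κ : P → Γ} {a : Γ} {y : P}

theorem finsum_mem_eq_LCensus (hθ : DynkinDatum θ) (hy : IsLeast {z | κ z = a} y) {T : Set P}
    (hLT : LSet θ κ y ⊆ T) (hTy : T ⊆ Set.Iio y) :
    ∑ᶠ z ∈ T, -θ (κ z) a = LCensus θ κ y := by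
  obtain ⟨rfl, hymin⟩ := hy
  refine finsum_mem_inter_support_eq' _ _ _ fun z hz => ⟨fun hzT => ?_, fun hzL => hLT hzL⟩
  have hzy : z < y := hTy hzT
  have hne : κ z ≠ κ y := fun h => (hymin h).not_gt hzy
  exact ⟨hzy, not_not.1 fun hadj => hz (by simp [hθ.eq_zero_of_not_adjColor hne hadj])⟩

end Census

section Extension

variable {B : Type*} [PartialOrder B] {θ : Γ → Γ → ℤ} {κ' : B → Γ} {ι : P → B} {x : B}

theorem FilterEmbedding.injective [PartialOrder P] {κ : P → Γ} (h : FilterEmbedding κ κ' ι) :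
    Function.Injective ι := fun p q hpq =>
  le_antisymm ((h.1 p q).1 hpq.le) ((h.1 q p).1 hpq.ge)

theorem FilterEmbedding.lt_iff_lt [PartialOrder P] {κ : P → Γ} (h : FilterEmbedding κ κ' ι)
    {p q : P} : ι p < ι q ↔ p < q := by
  simp only [lt_iff_le_not_ge, h.1]

theorem lt_of_compl_range_eq_singleton (hup : IsUpperSet (Set.range ι))
    (hcompl : (Set.range ι)ᶜ = {x}) {p : P} (h : ι p ≤ x ∨ x ≤ ι p) : x < ι p := by
  have hx : x ∉ Set.range ι := by rw [← Set.mem_compl_iff, hcompl]; rfl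
  rcases h with h | h
  · exact (hx (hup h ⟨p, rfl⟩)).elim
  · exact h.lt_of_ne fun he => hx ⟨p, he.symm⟩

theorem IsExtensionBy.LCensus_eq_two [PartialOrder P] {κ : P → Γ} {a : Γ} {y : P}
    (hθ : DynkinDatum θ) (hext : IsExtensionBy θ κ κ' a ι x) (hy : IsLeast {z | κ z = a} y) :
    LCensus θ κ y = 2 := by
  obtain ⟨-, ⟨-, -, hEC, -, hAC, hICE2, -⟩, -, hemb, hcompl, hx⟩ := hext
  have hcol := hemb.2.1
  have hx_lt := fun p => lt_of_compl_range_eq_singleton (p := p) hemb.2.2 hcompl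
  have hxy : x < ι y := hx_lt y ((hEC _ _ (by rw [hcol, hx, hy.1])).symm)
  set T : Set P := {w | x < ι w ∧ w < y}
  have hIoo : Set.Ioo x (ι y) = ι '' T := by
    ext b
    refine ⟨fun hb => ?_, ?_⟩
    · obtain ⟨w, rfl⟩ : b ∈ Set.range ι := by
        by_contra hb'
        rw [← Set.mem_compl_iff, hcompl] at hb'
        exact hb.1.ne' hb'
      exact ⟨w, ⟨hb.1, hemb.lt_iff_lt.1 hb.2⟩, rfl⟩
    · rintro ⟨w, ⟨hxw, hwy⟩, rfl⟩
      exact ⟨hxw, hemb.lt_iff_lt.2 hwy⟩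
  have hconsec : ∀ z ∈ Set.Ioo x (ι y), κ' z ≠ a := by
    rw [hIoo]
    rintro _ ⟨w, ⟨-, hwy⟩, rfl⟩ hwa
    exact (hy.2 ((hcol w).symm.trans hwa)).not_gt hwy
  have hICE := hICE2 a x (ι y) hx (by rw [hcol, hy.1]) hxy hconsec
  rw [hIoo, finsum_mem_image hemb.injective.injOn] at hICE
  simp only [hcol] at hICE
  have hLT : LSet θ κ y ⊆ T := fun w hw =>
    ⟨hx_lt w (hAC _ _ (by rw [hcol, hx, ← hy.1]; exact hw.2)), hw.1⟩
  rw [← finsum_mem_eq_LCensus hθ hy hLT fun w hw => hw.2, hICE]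

end Extension

/-- `P` with one new element `extra` adjoined, lying below exactly the elements of the given
upper set. -/
def AdjoinBelow [PartialOrder P] (_ : UpperSet P) : Type v := Option P

namespace AdjoinBelow

variable [PartialOrder P] {S : UpperSet P}

def of (p : P) : AdjoinBelow S := some p

def extra : AdjoinBelow S := none

@[elab_as_elim, induction_eliminator]
protected theorem induction {motive : AdjoinBelow S → Prop} (extra : motive extra)
    (of : ∀ p, motive (of p)) : ∀ b, motive b
  | none => extra
  | some p => of p

protected def le : AdjoinBelow S → AdjoinBelow S → Prop
  | none, none => True
  | none, some p => p ∈ S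
  | some _, none => False
  | some p, some q => p ≤ q

instance : PartialOrder (AdjoinBelow S) where
  le := AdjoinBelow.le
  le_refl
    | none => trivial
    | some p => le_refl p
  le_trans := by
    rintro (_ | p) (_ | q) (_ | r) hpq hqr
    exacts [trivial, hqr, False.elim hqr, S.upper hqr hpq, False.elim hpq, False.elim hpq,
      False.elim hqr, le_trans (α := P) hpq hqr]
  le_antisymm := by
    rintro (_ | p) (_ | q) hpq hqp
    exacts [rfl, False.elim hqp, False.elim hpq, congrArg some (le_antisymm (α := P) hpq hqp)]

@[simp] theorem of_ne_extra (p : P) : (of p : AdjoinBelow S) ≠ extra := Option.some_ne_none p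

@[simp] theorem of_le_of {p q : P} : (of p : AdjoinBelow S) ≤ of q ↔ p ≤ q := Iff.rfl

@[simp] theorem extra_le_of {p : P} : (extra : AdjoinBelow S) ≤ of p ↔ p ∈ S := Iff.rfl

@[simp] theorem not_of_le_extra {p : P} : ¬(of p : AdjoinBelow S) ≤ extra := id

@[simp] theorem of_lt_of {p q : P} : (of p : AdjoinBelow S) < of q ↔ p < q := by
  simp only [lt_iff_le_not_ge, of_le_of]

@[simp] theorem extra_lt_of {p : P} : (extra : AdjoinBelow S) < of p ↔ p ∈ S := by
  simp [lt_iff_le_not_ge]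

theorem not_lt_extra (b : AdjoinBelow S) : ¬b < extra := by
  induction b with
  | extra => exact lt_irrefl _
  | of p => exact fun h => not_of_le_extra h.le

theorem of_injective : Function.Injective (of : P → AdjoinBelow S) := Option.some_injective P

theorem compl_range_of : (Set.range (of : P → AdjoinBelow S))ᶜ = {extra} := by
  ext b
  induction b with
  | extra => simp
  | of p => simp

theorem isUpperSet_range_of : IsUpperSet (Set.range (of : P → AdjoinBelow S)) := by
  rintro b c hbc ⟨p, rfl⟩
  induction c with
  | extra => exact (not_of_le_extra hbc).elim
  | of q => exact ⟨q, rfl⟩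

theorem Ioo_of_of (p q : P) : Set.Ioo (of p : AdjoinBelow S) (of q) = of '' Set.Ioo p q := by
  ext b
  induction b with
  | extra => simp [not_lt_extra]
  | of r => simp [of_injective.eq_iff]

theorem Ioo_extra_of (q : P) :
    Set.Ioo (extra : AdjoinBelow S) (of q) = of '' ((S : Set P) ∩ Set.Iio q) := by
  ext b
  induction b with
  | extra => simp
  | of r => simp [of_injective.eq_iff]

theorem of_covBy_of {p q : P} : (of p : AdjoinBelow S) ⋖ of q ↔ p ⋖ q := by
  simp only [CovBy, of_lt_of]
  refine and_congr_right fun _ => ⟨fun h r => by simpa using @h (of r), fun h c => ?_⟩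
  induction c with
  | extra => exact fun hp => (not_lt_extra _ hp).elim
  | of r => simpa using @h r

theorem extra_covBy_of {q : P} : (extra : AdjoinBelow S) ⋖ of q ↔ Minimal (· ∈ S) q := by
  simp only [CovBy, extra_lt_of, minimal_iff_forall_lt]
  refine and_congr_right fun _ => ⟨fun h r hrq hr => h (c := of r) (by simpa) (by simpa),
    fun h c => ?_⟩
  induction c with
  | extra => exact fun hx => (lt_irrefl _ hx).elim
  | of r => simpa using fun hr hrq => h hrq hr

theorem connectedPoset (hP : ConnectedPoset P) (hS : (S : Set P).Nonempty) :
    ConnectedPoset (AdjoinBelow S) := by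
  intro T hT hTc
  obtain ⟨s, hs⟩ := hS
  by_cases hsplit : (of ⁻¹' T).Nonempty ∧ (of ⁻¹' T)ᶜ.Nonempty
  · obtain ⟨p, hp, q, hq, hpq⟩ := hP _ hsplit.1 hsplit.2
    exact ⟨of p, hp, of q, hq, by simpa using hpq⟩
  by_cases hx : extra ∈ T
  · have hsT : of s ∉ T := by
      obtain ⟨b, hb⟩ := hTc
      induction b with
      | extra => exact (hb hx).elim
      | of p => exact fun hsT => hsplit ⟨⟨s, hsT⟩, ⟨p, hb⟩⟩
    exact ⟨extra, hx, of s, hsT, Or.inl (extra_le_of.2 hs)⟩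
  · have hsT : of s ∈ T := by
      obtain ⟨b, hb⟩ := hT
      induction b with
      | extra => exact (hx hb).elim
      | of p => exact not_not.1 fun hsT => hsplit ⟨⟨p, hb⟩, ⟨s, hsT⟩⟩
    exact ⟨of s, hsT, extra, hx, Or.inr (extra_le_of.2 hs)⟩

instance [Finite P] : Finite (AdjoinBelow S) := inferInstanceAs (Finite (Option P))

def color (κ : P → Γ) (a : Γ) (b : AdjoinBelow S) : Γ := Option.elim b a κ

@[simp] theorem color_of (κ : P → Γ) (a : Γ) (p : P) : color (S := S) κ a (of p) = κ p := rfl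

theorem USet_of (θ : Γ → Γ → ℤ) (κ : P → Γ) (a : Γ) (p : P) :
    USet θ (color (S := S) κ a) (of p) = of '' USet θ κ p := by
  ext b
  induction b with
  | extra => simp [USet, not_lt_extra]
  | of q => simp [USet, of_injective.eq_iff]

end AdjoinBelow

section Construction

variable [PartialOrder P] {θ : Γ → Γ → ℤ} {κ : P → Γ} {a : Γ} {y : P}

/-- The elements that the new element of color `a` is placed below. -/
def adjUpperClosure (θ : Γ → Γ → ℤ) (κ : P → Γ) (a : Γ) : UpperSet P :=
  upperClosure {p | AdjColor θ (κ p) a ∨ κ p = a}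

theorem mem_adjUpperClosure_of_adjColor {p : P} (h : AdjColor θ (κ p) a) :
    p ∈ adjUpperClosure θ κ a :=
  subset_upperClosure (Or.inl h)

theorem mem_adjUpperClosure_of_color_eq {p : P} (h : κ p = a) : p ∈ adjUpperClosure θ κ a :=
  subset_upperClosure (Or.inr h)

namespace AdjoinBelow

local notation "E" => AdjoinBelow (adjUpperClosure θ κ a)

theorem coloredEC_color (hEC : ColoredEC κ) : ColoredEC (color κ a : E → Γ) := by
  intro b c hbc
  induction b with
  | extra =>
    induction c with
    | extra => exact Or.inl le_rfl
    | of q => exact Or.inl (extra_le_of.2 (mem_adjUpperClosure_of_color_eq hbc.symm))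
  | of p =>
    induction c with
    | extra => exact Or.inr (extra_le_of.2 (mem_adjUpperClosure_of_color_eq hbc))
    | of q => simpa using hEC p q hbc

theorem coloredAC_color (hθ : DynkinDatum θ) (hAC : ColoredAC θ κ) :
    ColoredAC θ (color κ a : E → Γ) := by
  intro b c hbc
  induction b with
  | extra =>
    induction c with
    | extra => exact Or.inl le_rfl
    | of q =>
      exact Or.inl (extra_le_of.2 (mem_adjUpperClosure_of_adjColor (hθ.adjColor_symm hbc)))
  | of p =>
    induction c with
    | extra => exact Or.inr (extra_le_of.2 (mem_adjUpperClosure_of_adjColor hbc))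
    | of q => simpa using hAC p q hbc

/-- A nonempty `L(y)` is what keeps `extra` from being covered by an element of color `a`. -/
theorem coloredNA_color (hθ : DynkinDatum θ) (hNA : ColoredNA θ κ)
    (hy : IsLeast {z | κ z = a} y) (hL : (LSet θ κ y).Nonempty) :
    ColoredNA θ (color κ a : E → Γ) := by
  intro b c hbc
  induction c with
  | extra => exact (not_lt_extra b hbc.lt).elim
  | of q =>
    induction b with
    | of p => exact hNA p q (of_covBy_of.1 hbc)
    | extra =>
      have hq := extra_covBy_of.1 hbc
      rcases hq.mem_of_mem_upperClosure with hadj | hqa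
      · exact hθ.adjColor_symm hadj
      · obtain ⟨z, hzy, hz⟩ := hL
        rw [hy.1] at hz
        exact (hq.not_lt (mem_adjUpperClosure_of_adjColor hz) (hzy.trans_le (hy.2 hqa))).elim

theorem coloredICE2_color (hθ : DynkinDatum θ) (hICE2 : ColoredICE2 θ κ)
    (hy : IsLeast {z | κ z = a} y) (hL : LCensus θ κ y = 2) :
    ColoredICE2 θ (color κ a : E → Γ) := by
  intro c u v hu hv huv hconsec
  induction v with
  | extra => exact (not_lt_extra u huv).elim
  | of q =>
    induction u with
    | of p =>
      rw [Ioo_of_of, finsum_mem_image of_injective.injOn]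
      exact hICE2 c p q hu hv (of_lt_of.1 huv) fun z hz =>
        hconsec (of z) (by simpa using hz)
    | extra =>
      obtain rfl : a = c := hu
      obtain rfl : y = q := by
        refine (hy.2 hv).eq_of_not_lt fun hyq => hconsec (of y) ?_ hy.1
        exact ⟨extra_lt_of.2 (mem_adjUpperClosure_of_color_eq hy.1), of_lt_of.2 hyq⟩
      rw [Ioo_extra_of, finsum_mem_image of_injective.injOn]
      have hLS : LSet θ κ y ⊆ adjUpperClosure θ κ a := fun z hz =>
        mem_adjUpperClosure_of_adjColor (hy.1 ▸ hz.2)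
      exact (finsum_mem_eq_LCensus hθ hy (Set.subset_inter hLS fun _ hz => hz.1)
        Set.inter_subset_right).trans hL

theorem coloredUCB1_color (hUCB1 : ColoredUCB1 θ κ) (hy : κ y = a) :
    ColoredUCB1 θ (color κ a : E → Γ) := by
  intro b hmax
  induction b with
  | extra => exact (hmax (of y) hy (extra_lt_of.2 (mem_adjUpperClosure_of_color_eq hy))).elim
  | of p =>
    obtain ⟨hfin, hsum⟩ := hUCB1 p fun z hz hpz => hmax (of z) hz (of_lt_of.2 hpz)
    rw [USet_of, finsum_mem_image of_injective.injOn]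
    exact ⟨hfin.image of, hsum⟩

theorem isExtensionBy [Finite P] (hθ : DynkinDatum θ) (hdc : GColoredDComplete θ κ)
    (hconn : ConnectedPoset P) (hy : IsLeast {z | κ z = a} y) (hL : LCensus θ κ y = 2) :
    IsExtensionBy θ κ (color κ a : E → Γ) a of extra := by
  obtain ⟨-, hsurj, hEC, hNA, hAC, hICE2, hUCB1⟩ := hdc
  have hLne : (LSet θ κ y).Nonempty :=
    Set.nonempty_iff_ne_empty.2 fun h => by simp [LCensus, h] at hL
  refine ⟨inferInstance, ⟨fun _ _ => Set.toFinite _, fun c => (hsurj c).imp' of fun _ => id,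
    coloredEC_color hEC, coloredNA_color hθ hNA hy hLne, coloredAC_color hθ hAC,
    coloredICE2_color hθ hICE2 hy hL, coloredUCB1_color hUCB1 hy.1⟩,
    connectedPoset hconn ⟨y, mem_adjUpperClosure_of_color_eq hy.1⟩,
    ⟨fun _ _ => of_le_of, fun _ => rfl, isUpperSet_range_of⟩, compl_range_of, rfl⟩

end AdjoinBelow

end Construction

theorem extendable_iff_census_two_general [PartialOrder P] [Fintype P]
    (θ : Γ → Γ → ℤ) (κ : P → Γ) (hθ : DynkinDatum θ)
    (hdc : GColoredDComplete θ κ) (hconn : ConnectedPoset P)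
    (a : Γ) (y : P) (hy : κ y = a) (hymin : ∀ z : P, κ z = a → y ≤ z) :
    (∃ (B : Type v) (instB : PartialOrder B) (κ' : B → Γ) (ι : P → B) (x : B),
        @IsExtensionBy Γ P B inferInstance instB θ κ κ' a ι x) ↔
      LCensus θ κ y = 2 := by
  have hleast : IsLeast {z | κ z = a} y := ⟨hy, hymin⟩
  constructor
  · rintro ⟨B, _, κ', ι, x, hext⟩
    exact hext.LCensus_eq_two hθ hleast
  · intro hL
    exact ⟨_, _, _, _, _, AdjoinBelow.isExtensionBy hθ hdc hconn hleast hL⟩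

/-- A connected finite Γ-colored d-complete poset is extendable by the
color a if and only if its lower frontier census for a equals 2. -/
theorem extendable_iff_census_two [Fintype Γ] [PartialOrder P] [Fintype P] [Nonempty P]
    (θ : Γ → Γ → ℤ) (κ : P → Γ) (hθ : DynkinDatum θ)
    (hdc : GColoredDComplete θ κ) (hconn : ConnectedPoset P)
    (a : Γ) (y : P) (hy : κ y = a) (hymin : ∀ z : P, κ z = a → y ≤ z) :
    (∃ (B : Type v) (instB : PartialOrder B) (κ' : B → Γ) (ι : P → B) (x : B),
        @IsExtensionBy Γ P B inferInstance instB θ κ κ' a ι x) ↔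
      LCensus θ κ y = 2 :=
  extendable_iff_census_two_general θ κ hθ hdc hconn a y hy hymin
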